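/- arXiv:1410.4154 — 3 statements merged into one kernel-verified Lean document; each statement's English description precedes it below -/
import Mathlib

section
/- In the game G₂, every Nash equilibrium σ satisfies E_leader(σ) = 0; indeed, the outcome play of every Nash equilibrium is the play that loops at vertex 1 forever. -/
open scoped BigOperators

/-- A multi-player discounted sum game (MDSG) on sets of players `P`,
vertices `V` and actions `A`, all required to be finite (`A` nonempty).
The `owner` of a vertex chooses the action there; `tr` is the transition
function, `rew p v a` is the reward of player `p` for taking action `a`
at vertex `v`, `init` is the initial probability distribution on the
vertices, and `disc` is the discount factor. -/
structure MDSG (P V A : Type) : Type where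
  fin_P : Finite P
  fin_V : Finite V
  fin_A : Finite A
  nonempty_A : Nonempty A
  owner : V → P
  tr : V → A → V
  rew : P → V → A → ℝ
  init : V → ℝ
  init_nonneg : ∀ v, 0 ≤ init v
  init_sum : ∑' v, init v = 1
  disc : ℝ
  disc_pos : 0 < disc
  disc_lt_one : disc < 1

/-- A pure strategy profile: given the history (the list of vertex/action pairs
seen so far) and the current vertex, the owner of the current vertex chooses
an action.  The strategy of an individual player `p` is the restriction of the
profile to the vertices owned by `p`. -/
abbrev Profile (V A : Type) : Type := List (V × A) → V → A

namespace MDSG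

variable {P V A : Type}

/-- The pair (history, current vertex) after `n` steps of the play of `σ` from `v`. -/
def histState (G : MDSG P V A) (σ : Profile V A) (v : V) : ℕ → List (V × A) × V
  | 0 => ([], v)
  | n + 1 =>
    let s := G.histState σ v n
    (s.1 ++ [(s.2, σ s.1 s.2)], G.tr s.2 (σ s.1 s.2))

/-- The vertex visited at step `n` of the play of `σ` from `v`. -/
def playV (G : MDSG P V A) (σ : Profile V A) (v : V) (n : ℕ) : V :=
  (G.histState σ v n).2

/-- The action taken at step `n` of the play of `σ` from `v`. -/
def playA (G : MDSG P V A) (σ : Profile V A) (v : V) (n : ℕ) : A :=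
  σ (G.histState σ v n).1 (G.playV σ v n)

/-- The discounted reward of player `p` on the play of `σ` from `v`. -/
noncomputable def reward (G : MDSG P V A) (p : P) (σ : Profile V A) (v : V) : ℝ :=
  ∑' i : ℕ, G.rew p (G.playV σ v i) (G.playA σ v i) * G.disc ^ i

/-- The expected reward of player `p` under the strategy profile `σ`. -/
noncomputable def ER (G : MDSG P V A) (p : P) (σ : Profile V A) : ℝ :=
  ∑' v : V, G.init v * G.reward p σ v

/-- `σ'` differs from `σ` at most in the strategy of player `p`. -/
def DiffOnly (G : MDSG P V A) (σ σ' : Profile V A) (p : P) : Prop :=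
  ∀ h v, G.owner v ≠ p → σ' h v = σ h v

/-- Nash equilibrium: no player can profit from a unilateral deviation. -/
def IsNash (G : MDSG P V A) (σ : Profile V A) : Prop :=
  ∀ p σ', G.DiffOnly σ σ' p → G.ER p σ' ≤ G.ER p σ

/-- Leader strategy profile: no player other than the leader `l` can profit
from a unilateral deviation. -/
def IsLeaderSP (G : MDSG P V A) (l : P) (σ : Profile V A) : Prop :=
  ∀ p, p ≠ l → ∀ σ', G.DiffOnly σ σ' p → G.ER p σ' ≤ G.ER p σ

/-- `σ` is a (pure) strategy profile with memory bound `b`: there is a memory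
set `M` with `|M| ≤ b`, an initial memory state, a memory update function and
a usage function producing all the actions of `σ`. -/
def MemBound (G : MDSG P V A) (σ : Profile V A) (b : ℕ) : Prop :=
  ∃ n : ℕ, n ≤ b ∧ ∃ (m₀ : Fin n) (μ : Fin n → V × A → Fin n) (u : Fin n → V → A),
    ∀ h v, σ h v = u (h.foldl μ m₀) v

/-- `σ` is memoryless (positional): actions depend only on the current vertex. -/
def Positional (G : MDSG P V A) (σ : Profile V A) : Prop :=
  ∀ h h' v, σ h v = σ h' v

open Classical in
/-- Combination of a strategy for player `p` with a joint strategy of the other players. -/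
noncomputable def combine (G : MDSG P V A) (p : P) (τp τo : Profile V A) : Profile V A :=
  fun h v => if G.owner v = p then τp h v else τo h v

/-- The lower value of player `p` at vertex `v`: the supremum over the pure
strategies of `p` of the infimum over the joint pure strategies of the other
players of the reward of `p` on the resulting play from `v`. -/
noncomputable def lowerValue (G : MDSG P V A) (p : P) (v : V) : ℝ :=
  ⨆ τp : Profile V A, ⨅ τo : Profile V A, G.reward p (G.combine p τp τo) v

/-- The upper value of player `p` at vertex `v`. -/
noncomputable def upperValue (G : MDSG P V A) (p : P) (v : V) : ℝ :=
  ⨅ τo : Profile V A, ⨆ τp : Profile V A, G.reward p (G.combine p τp τo) v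

/-- The history `h` contains a deviation from `σ` at position `i`. -/
def DeviatesAt (G : MDSG P V A) (σ : Profile V A) (h : List (V × A)) (i : ℕ) : Prop :=
  ∃ hi : i < h.length, (h.get ⟨i, hi⟩).2 ≠ σ (h.take i) (h.get ⟨i, hi⟩).1

/-- Reward-and-punish profile: on every history that deviates from the
prescribed actions, every action depends only on the current vertex and on the
identity of the first player who deviated (all players follow a fixed
positional strategy depending only on the first deviator). -/
def IsRewardPunish (G : MDSG P V A) (σ : Profile V A) : Prop :=
  ∃ punish : P → V → A, ∀ (h : List (V × A)) (i : ℕ) (hi : i < h.length),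
    G.DeviatesAt σ h i → (∀ j, j < i → ¬ G.DeviatesAt σ h j) →
    ∀ v, σ h v = punish (G.owner (h.get ⟨i, hi⟩).1) v

/-- The outcome plays of `σ` are generated with compliance memory bound `b`:
on every history on which all players have complied, the actions of `σ` are
produced by a memory structure with at most `b` states. -/
def ComplianceMemBound (G : MDSG P V A) (σ : Profile V A) (b : ℕ) : Prop :=
  ∃ n : ℕ, n ≤ b ∧ ∃ (m₀ : Fin n) (μ : Fin n → V × A → Fin n) (u : Fin n → V → A),
    ∀ h : List (V × A), (∀ i, ¬ G.DeviatesAt σ h i) →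
      ∀ v, σ h v = u (h.foldl μ m₀) v

/-- The set of stationary mixed decision vectors: an assignment of a
probability distribution over the actions to every vertex. -/
def simplexD (V A : Type) : Set (V → A → ℝ) :=
  {d | ∀ v, (∀ a, 0 ≤ d v a) ∧ ∑' a, d v a = 1}

end MDSG
namespace MDSG

/-- The game `G₂` (Figure 3 of the paper): three players `0, 1, 2`
(representing players 1, 2, 3, where player `1` — i.e. player 2 — is the
leader), three vertices `0, 1, 2` (representing vertices 1, 2, 3, vertex `i`
owned by player `i`), actions `Bool` (`true` = "go", `false` = "stay").
Vertex `0`: "stay" loops at `0` with rewards `(0,0,0)`, "go" moves to `1`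
with rewards `(0,0,0)`.  Vertex `1`: "stay" loops at `1` with rewards
`(1,1,-2)`, "go" moves to `2` with rewards `(-3,3,0)`.  Vertex `2`: both
actions loop at `2` with rewards `(-3,3,0)`.  The initial distribution is the
point mass at vertex `0`, and the discount factor is `1/2`. -/
noncomputable def G2 : MDSG (Fin 3) (Fin 3) Bool where
  fin_P := inferInstance
  fin_V := inferInstance
  fin_A := inferInstance
  nonempty_A := inferInstance
  owner := fun v => v
  tr := fun v a =>
    if v = 0 then (if a then 1 else 0)
    else if v = 1 then (if a then 2 else 1)
    else 2
  rew := fun p v a =>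
    if v = 0 then 0
    else if v = 1 then
      (if a then (if p = 0 then -3 else if p = 1 then 3 else 0)
       else (if p = 0 then 1 else if p = 1 then 1 else -2))
    else (if p = 0 then -3 else if p = 1 then 3 else 0)
  init := fun v => if v = 0 then 1 else 0
  init_nonneg := by intro v; split <;> norm_num
  init_sum := by simpa using tsum_ite_eq (0 : Fin 3) (1 : ℝ)
  disc := 1 / 2
  disc_pos := by norm_num
  disc_lt_one := by norm_num

end MDSG

/-!
If the outcome play of a Nash equilibrium `σ` ever leaves vertex `0`, compare `σ` with the
deviations `σ₀` (player `0` stays at vertex `0` forever) and `σ₁` (player `1` always goes at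
vertex `1`). Off vertex `0` every action has `t₀ + 2 t₁ = 3`, and along the play of `σ₁`, which
leaves vertex `0` at the same time as that of `σ`, player `1` collects `3` at every step off
vertex `0`; hence `r₀(σ) + 2 r₁(σ) = r₁(σ₁) > 0`. Nash stability gives `0 = r₀(σ₀) ≤ r₀(σ)` and
`r₁(σ₁) ≤ r₁(σ)`, so `2 r₁(σ₁) ≤ r₁(σ₁)`, a contradiction.
-/

namespace MDSG

variable {P V A : Type}

section General

variable (G : MDSG P V A)

theorem playV_succ (σ : Profile V A) (v : V) (n : ℕ) :
    G.playV σ v (n + 1) = G.tr (G.playV σ v n) (G.playA σ v n) :=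
  rfl

theorem summable_rew_mul_disc_pow (p : P) (σ : Profile V A) (v : V) :
    Summable fun i => G.rew p (G.playV σ v i) (G.playA σ v i) * G.disc ^ i := by
  have := G.fin_V
  have := G.fin_A
  obtain ⟨C, hC⟩ := (Set.finite_range fun x : V × A => |G.rew p x.1 x.2|).bddAbove
  refine Summable.of_norm_bounded
    ((summable_geometric_of_lt_one G.disc_pos.le G.disc_lt_one).mul_left C) fun i => ?_
  rw [Real.norm_eq_abs, abs_mul, abs_of_pos (pow_pos G.disc_pos i)]
  exact mul_le_mul_of_nonneg_right (hC ⟨(_, _), rfl⟩) (pow_pos G.disc_pos i).le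

theorem reward_add_mul_reward (p q : P) (c : ℝ) (σ : Profile V A) (v : V) :
    G.reward p σ v + c * G.reward q σ v =
      ∑' i, (G.rew p (G.playV σ v i) (G.playA σ v i) +
        c * G.rew q (G.playV σ v i) (G.playA σ v i)) * G.disc ^ i := by
  rw [reward, reward, ← tsum_mul_left, ← Summable.tsum_add (G.summable_rew_mul_disc_pow p σ v)
    ((G.summable_rew_mul_disc_pow q σ v).mul_left c)]
  exact tsum_congr fun i => by ring

theorem ER_eq_reward_of_init_eq_ite [DecidableEq V] {v : V}
    (hinit : ∀ w, G.init w = if w = v then 1 else 0) (p : P) (σ : Profile V A) :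
    G.ER p σ = G.reward p σ v := by
  simp only [ER, hinit, ite_mul, one_mul, zero_mul]
  exact tsum_ite_eq v _

theorem histState_eq_of_agree {σ σ' : Profile V A} {v : V} {n : ℕ}
    (h : ∀ i < n, σ' (G.histState σ v i).1 (G.histState σ v i).2 =
      σ (G.histState σ v i).1 (G.histState σ v i).2) :
    G.histState σ' v n = G.histState σ v n := by
  induction n with
  | zero => rfl
  | succ n ih =>
    have hn := ih fun i hi => h i (Nat.lt_succ_of_lt hi)
    simp only [histState, hn, h n (Nat.lt_succ_self n)]

theorem playV_eq_of_loop {τ : Profile V A} {w : V} {a : A} (hτ : ∀ h, τ h w = a)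
    (hloop : G.tr w a = w) (n : ℕ) : G.playV τ w n = w := by
  induction n with
  | zero => rfl
  | succ n ih => rw [playV_succ, playA, ih, hτ, hloop]

end General

def overrideAt [DecidableEq V] (σ : Profile V A) (w : V) (a : A) : Profile V A :=
  fun h v => if v = w then a else σ h v

section Override

variable [DecidableEq V] (σ : Profile V A) (w : V) (a : A)

@[simp]
theorem overrideAt_self (h : List (V × A)) : overrideAt σ w a h w = a :=
  if_pos rfl

theorem overrideAt_of_ne {h : List (V × A)} {v : V} (hv : v ≠ w) :
    overrideAt σ w a h v = σ h v :=
  if_neg hv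

theorem diffOnly_overrideAt (G : MDSG P V A) : G.DiffOnly σ (overrideAt σ w a) (G.owner w) :=
  fun _ _ hv => overrideAt_of_ne σ w a fun hvw => hv (congrArg G.owner hvw)

end Override

section G2

variable (τ : Profile (Fin 3) Bool)

theorem G2_ER_eq_reward (p : Fin 3) : G2.ER p τ = G2.reward p τ 0 :=
  G2.ER_eq_reward_of_init_eq_ite (fun _ => rfl) p τ

theorem G2_rew_zero (p : Fin 3) (a : Bool) : G2.rew p 0 a = 0 :=
  rfl

theorem G2_rew_zero_add_two_mul_rew_one (v : Fin 3) (a : Bool) :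
    G2.rew 0 v a + 2 * G2.rew 1 v a = if v = 0 then 0 else 3 := by
  fin_cases v <;> cases a <;> norm_num [G2]

theorem G2_rew_one_of_go (v : Fin 3) (a : Bool) (hgo : v = 1 → a = true) :
    G2.rew 1 v a = if v = 0 then 0 else 3 := by
  fin_cases v <;> cases a <;> simp_all [G2]

theorem G2_rew_one_pos (v : Fin 3) (a : Bool) (hv : v ≠ 0) : 0 < G2.rew 1 v a := by
  fin_cases v <;> cases a <;> simp_all [G2]

theorem G2_rew_one_nonneg (v : Fin 3) (a : Bool) : 0 ≤ G2.rew 1 v a := by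
  fin_cases v <;> cases a <;> norm_num [G2]

theorem G2_tr_ne_zero {v : Fin 3} (a : Bool) (hv : v ≠ 0) : G2.tr v a ≠ 0 := by
  fin_cases v <;> cases a <;> simp_all [G2]

theorem G2_playV_ne_zero_of_le {m n : ℕ} (hm : G2.playV τ 0 m ≠ 0) (hmn : m ≤ n) :
    G2.playV τ 0 n ≠ 0 := by
  induction n, hmn using Nat.le_induction with
  | base => exact hm
  | succ n _ ih => rw [playV_succ]; exact G2_tr_ne_zero _ ih

theorem G2_reward_eq_zero_of_stays {p : Fin 3} (hstay : ∀ n, G2.playV τ 0 n = 0) :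
    G2.reward p τ 0 = 0 := by
  simp only [reward, hstay, G2_rew_zero, zero_mul, tsum_zero]

theorem G2_reward_one_pos {n : ℕ} (hn : G2.playV τ 0 n ≠ 0) : 0 < G2.reward 1 τ 0 :=
  (G2.summable_rew_mul_disc_pow 1 τ 0).tsum_pos
    (fun i => mul_nonneg (G2_rew_one_nonneg _ _) (pow_pos G2.disc_pos i).le) n
    (mul_pos (G2_rew_one_pos _ _ hn) (pow_pos G2.disc_pos n))

theorem G2_playV_overrideAt_one_eq_zero_iff (a : Bool) (n : ℕ) :
    G2.playV (overrideAt τ 1 a) 0 n = 0 ↔ G2.playV τ 0 n = 0 := by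
  -- The plays agree until that of `τ` first leaves vertex `0`, and neither returns there.
  have agree : ∀ m, (∀ i < m, G2.playV τ 0 i = 0) →
      G2.playV (overrideAt τ 1 a) 0 m = G2.playV τ 0 m := fun m hpre =>
    congrArg Prod.snd <| G2.histState_eq_of_agree fun i hi =>
      overrideAt_of_ne τ 1 a (by change G2.playV τ 0 i ≠ 1; rw [hpre i hi]; decide)
  by_cases hpre : ∃ i < n, G2.playV τ 0 i ≠ 0
  · obtain ⟨k, hkn, hk⟩ := hpre
    have hex : ∃ i, G2.playV τ 0 i ≠ 0 := ⟨k, hk⟩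
    have hexit : G2.playV (overrideAt τ 1 a) 0 (Nat.find hex) ≠ 0 := by
      rw [agree _ fun i hi => not_not.mp (Nat.find_min hex hi)]
      exact Nat.find_spec hex
    have hle : Nat.find hex ≤ n := (Nat.find_min' hex hk).trans hkn.le
    exact iff_of_false (G2_playV_ne_zero_of_le _ hexit hle)
      (G2_playV_ne_zero_of_le _ (Nat.find_spec hex) hle)
  · rw [agree n fun i hi => not_not.mp fun h => hpre ⟨i, hi, h⟩]

theorem G2_reward_overrideAt_zero_stay (p : Fin 3) :
    G2.reward p (overrideAt τ 0 false) 0 = 0 :=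
  G2_reward_eq_zero_of_stays _ <| G2.playV_eq_of_loop (overrideAt_self τ 0 false) rfl

theorem G2_reward_zero_add_two_mul_reward_one :
    G2.reward 0 τ 0 + 2 * G2.reward 1 τ 0 = G2.reward 1 (overrideAt τ 1 true) 0 := by
  rw [G2.reward_add_mul_reward, reward]
  refine tsum_congr fun i => ?_
  rw [G2_rew_zero_add_two_mul_rew_one, G2_rew_one_of_go _ _ fun h => by
    rw [playA, h, overrideAt_self]]
  simp only [G2_playV_overrideAt_one_eq_zero_iff]

end G2

end MDSG

open MDSG in
/-- In the game `G₂`, every Nash equilibrium `σ` gives the leader (player `1`,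
i.e. player 2 of the paper) expected reward `0`; indeed, the outcome play of
every Nash equilibrium loops at vertex `0` (vertex 1 of the paper) forever. -/
theorem every_Nash_of_G2_gives_leader_zero (σ : Profile (Fin 3) Bool)
    (hσ : G2.IsNash σ) :
    G2.ER 1 σ = 0 ∧ ∀ n : ℕ, G2.playV σ 0 n = 0 := by
  have stays : ∀ n, G2.playV σ 0 n = 0 := by
    by_contra! ⟨n, hn⟩
    have hstay := hσ 0 _ (diffOnly_overrideAt σ 0 false G2)
    have hgo := hσ 1 _ (diffOnly_overrideAt σ 1 true G2)
    rw [G2_ER_eq_reward, G2_ER_eq_reward, G2_reward_overrideAt_zero_stay] at hstay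
    rw [G2_ER_eq_reward, G2_ER_eq_reward] at hgo
    have hpos := G2_reward_one_pos _ (n := n)
      ((G2_playV_overrideAt_one_eq_zero_iff σ true n).not.mpr hn)
    linarith [G2_reward_zero_add_two_mul_reward_one σ]
  exact ⟨by rw [G2_ER_eq_reward, G2_reward_eq_zero_of_stays σ stays], stays⟩
end

section
/- Every multi-player discounted sum game has a pure Nash equilibrium (and hence, for any designated leader, a pure leader strategy profile). -/
open scoped BigOperators

/-!
For each player `p`, the zero-sum game in which `p` maximises its discounted reward against the
coalition of all other players has a value `G.value p`: the fixed point of the Bellman operator,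
which is a `disc`-contraction. Along a play on which `p` chooses optimal actions, `G.value p` is a
subsolution of the reward recursion, and along a play on which the others choose the actions that
minimise it, a supersolution; telescoping shows that `p` can secure `G.value p` and can be held
to it.

In the equilibrium every player follows its optimal actions until somebody deviates, and from then
on everybody punishes the first deviator. If `p` deviates first, at step `n`, it gets at most
`G.value p` from step `n` on, whereas by complying it would get at least that much.
-/

open Finset Filter

theorem abs_sup'_sub_sup'_le {ι : Type*} {s : Finset ι} (hs : s.Nonempty) {f g : ι → ℝ} {D : ℝ}
    (h : ∀ i ∈ s, |f i - g i| ≤ D) : |s.sup' hs f - s.sup' hs g| ≤ D := by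
  have key : ∀ f g : ι → ℝ, (∀ i ∈ s, f i - g i ≤ D) → s.sup' hs f - s.sup' hs g ≤ D :=
    fun f g h => sub_le_iff_le_add.2 <| sup'_le _ _ fun i hi => by
      linarith [h i hi, le_sup' g hi]
  exact abs_sub_le_iff.2 ⟨key f g fun i hi => (abs_le.1 (h i hi)).2,
    key g f fun i hi => by linarith [(abs_le.1 (h i hi)).1]⟩

theorem abs_inf'_sub_inf'_le {ι : Type*} {s : Finset ι} (hs : s.Nonempty) {f g : ι → ℝ} {D : ℝ}
    (h : ∀ i ∈ s, |f i - g i| ≤ D) : |s.inf' hs f - s.inf' hs g| ≤ D := by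
  have key : ∀ f g : ι → ℝ, (∀ i ∈ s, f i - g i ≤ D) → s.inf' hs f - s.inf' hs g ≤ D :=
    fun f g h => by
      obtain ⟨i, hi, hg⟩ := exists_mem_eq_inf' hs g
      linarith [h i hi, inf'_le f hi]
  exact abs_sub_le_iff.2 ⟨key f g fun i hi => (abs_le.1 (h i hi)).2,
    key g f fun i hi => by linarith [(abs_le.1 (h i hi)).1]⟩

theorem summable_comp_mul_pow_of_finite {α : Type*} [Finite α] (f : α → ℝ) (x : ℕ → α) {c : ℝ}
    (hc₀ : 0 ≤ c) (hc₁ : c < 1) : Summable fun n => f (x n) * c ^ n := by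
  obtain ⟨C, hC⟩ := Finite.bddAbove_range fun a => |f a|
  refine Summable.of_norm_bounded ((summable_geometric_of_lt_one hc₀ hc₁).mul_left C) fun n => ?_
  rw [norm_mul, norm_pow, Real.norm_of_nonneg hc₀]
  exact mul_le_mul_of_nonneg_right (hC ⟨x n, rfl⟩) (pow_nonneg hc₀ n)

section Telescoping

variable {u r : ℕ → ℝ} {c C : ℝ}

theorem le_tsum_mul_pow_of_le_add_mul (hc₀ : 0 ≤ c) (hc₁ : c < 1) (hu : ∀ n, |u n| ≤ C)
    (hr : Summable fun n => r n * c ^ n) (h : ∀ n, u n ≤ r n + c * u (n + 1)) :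
    u 0 ≤ ∑' n, r n * c ^ n := by
  have hpartial : ∀ n, u 0 ≤ ∑ i ∈ range n, r i * c ^ i + u n * c ^ n := by
    intro n
    induction n with
    | zero => simp
    | succ n ih =>
      have := mul_le_mul_of_nonneg_right (h n) (pow_nonneg hc₀ n)
      rw [sum_range_succ, pow_succ]
      linarith
  have hlim := hr.hasSum.tendsto_sum_nat.add <|
    bdd_le_mul_tendsto_zero' C (Eventually.of_forall hu)
      (tendsto_pow_atTop_nhds_zero_of_lt_one hc₀ hc₁)
  rw [add_zero] at hlim
  exact ge_of_tendsto' hlim hpartial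

theorem tsum_mul_pow_le_of_add_mul_le (hc₀ : 0 ≤ c) (hc₁ : c < 1) (hu : ∀ n, |u n| ≤ C)
    (hr : Summable fun n => r n * c ^ n) (h : ∀ n, r n + c * u (n + 1) ≤ u n) :
    ∑' n, r n * c ^ n ≤ u 0 := by
  have := le_tsum_mul_pow_of_le_add_mul (u := -u) (r := -r) hc₀ hc₁ (by simpa using hu)
    (by simpa only [Pi.neg_apply, neg_mul] using hr.neg) fun n => by
      simp only [Pi.neg_apply]; linarith [h n]
  simp only [Pi.neg_apply, neg_mul, tsum_neg] at this
  linarith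

end Telescoping

namespace MDSG

variable {P V A : Type}

section Play

variable (G : MDSG P V A)

theorem histState_succ (σ : Profile V A) (v : V) (n : ℕ) :
    G.histState σ v (n + 1) =
      ((G.histState σ v n).1 ++ [((G.histState σ v n).2, G.playA σ v n)],
        G.tr (G.histState σ v n).2 (G.playA σ v n)) :=
  rfl

theorem histState_eq_of_playA_eq {σ σ' : Profile V A} {v : V} {n : ℕ}
    (h : ∀ i < n, G.playA σ' v i = G.playA σ v i) : G.histState σ' v n = G.histState σ v n := by
  induction n with
  | zero => rfl
  | succ n ih =>
    rw [histState_succ, histState_succ, h n n.lt_succ_self,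
      ih fun i hi => h i (hi.trans n.lt_succ_self)]

noncomputable def tailReward (p : P) (σ : Profile V A) (v : V) (n : ℕ) : ℝ :=
  ∑' k, G.rew p (G.playV σ v (n + k)) (G.playA σ v (n + k)) * G.disc ^ k

theorem reward_eq_sum_add_tailReward [Finite V] [Finite A] (p : P) (σ : Profile V A) (v : V)
    (n : ℕ) :
    G.reward p σ v = ∑ i ∈ range n, G.rew p (G.playV σ v i) (G.playA σ v i) * G.disc ^ i
      + G.disc ^ n * G.tailReward p σ v n := by
  rw [reward, ← (summable_comp_mul_pow_of_finite (fun x : V × A => G.rew p x.1 x.2)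
    (fun i => (G.playV σ v i, G.playA σ v i)) G.disc_pos.le G.disc_lt_one).sum_add_tsum_nat_add n,
    tailReward, ← tsum_mul_left]
  congr 1
  refine tsum_congr fun k => ?_
  rw [add_comm k n, pow_add]
  ring

theorem reward_le_reward_of_playA_eq_of_tailReward_le [Finite V] [Finite A] {σ σ' : Profile V A}
    {p : P} {v : V} {n : ℕ} (h : ∀ i < n, G.playA σ' v i = G.playA σ v i)
    (htail : G.tailReward p σ' v n ≤ G.tailReward p σ v n) :
    G.reward p σ' v ≤ G.reward p σ v := by
  rw [reward_eq_sum_add_tailReward _ _ _ _ n, reward_eq_sum_add_tailReward _ _ _ _ n]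
  refine add_le_add (le_of_eq (sum_congr rfl fun i hi => ?_))
    (mul_le_mul_of_nonneg_left htail (pow_nonneg G.disc_pos.le n))
  have hi := mem_range.1 hi
  rw [h i hi, playV, playV, G.histState_eq_of_playA_eq fun j hj => h j (hj.trans hi)]

end Play

section Value

variable [Fintype V] [Fintype A] [Nonempty A] [DecidableEq P] (G : MDSG P V A) (p : P)

noncomputable def lookahead (f : V → ℝ) (v : V) (a : A) : ℝ :=
  G.rew p v a + G.disc * f (G.tr v a)

noncomputable def bellman (f : V → ℝ) (v : V) : ℝ :=
  if G.owner v = p then univ.sup' univ_nonempty (G.lookahead p f v)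
  else univ.inf' univ_nonempty (G.lookahead p f v)

theorem contractingWith_bellman : ContractingWith ⟨G.disc, G.disc_pos.le⟩ (G.bellman p) := by
  refine ⟨G.disc_lt_one, LipschitzWith.of_dist_le_mul fun f g => ?_⟩
  refine (dist_pi_le_iff (mul_nonneg G.disc_pos.le dist_nonneg)).2 fun v => ?_
  have step : ∀ a ∈ univ, |G.lookahead p f v a - G.lookahead p g v a| ≤ G.disc * dist f g := by
    intro a _
    rw [lookahead, lookahead, add_sub_add_left_eq_sub, ← mul_sub, abs_mul,
      abs_of_pos G.disc_pos, ← Real.dist_eq]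
    exact mul_le_mul_of_nonneg_left (dist_le_pi_dist f g _) G.disc_pos.le
  rw [Real.dist_eq, bellman, bellman]
  split_ifs
  · exact abs_sup'_sub_sup'_le _ step
  · exact abs_inf'_sub_inf'_le _ step

noncomputable def value : V → ℝ :=
  ContractingWith.fixedPoint (G.bellman p) (G.contractingWith_bellman p)

theorem bellman_value : G.bellman p (G.value p) = G.value p :=
  (G.contractingWith_bellman p).fixedPoint_isFixedPt

variable {G p}

theorem lookahead_value_le {v : V} (hv : G.owner v = p) (a : A) :
    G.lookahead p (G.value p) v a ≤ G.value p v := by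
  conv_rhs => rw [← bellman_value, bellman, if_pos hv]
  exact le_sup' _ (mem_univ a)

theorem value_le_lookahead_value {v : V} (hv : G.owner v ≠ p) (a : A) :
    G.value p v ≤ G.lookahead p (G.value p) v a := by
  conv_lhs => rw [← bellman_value, bellman, if_neg hv]
  exact inf'_le _ (mem_univ a)

variable (G p)

theorem exists_lookahead_value_eq (v : V) : ∃ a, G.lookahead p (G.value p) v a = G.value p v := by
  conv in G.value p v => rw [← bellman_value, bellman]
  split_ifs
  · obtain ⟨a, -, ha⟩ := exists_mem_eq_sup' univ_nonempty (G.lookahead p (G.value p) v)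
    exact ⟨a, ha.symm⟩
  · obtain ⟨a, -, ha⟩ := exists_mem_eq_inf' univ_nonempty (G.lookahead p (G.value p) v)
    exact ⟨a, ha.symm⟩

/-- An action that is optimal for `p` at `v` if `p` owns `v`, and that punishes `p` optimally
otherwise. -/
noncomputable def optimalAction (v : V) : A :=
  (G.exists_lookahead_value_eq p v).choose

theorem lookahead_optimalAction (v : V) :
    G.lookahead p (G.value p) v (G.optimalAction p v) = G.value p v :=
  (G.exists_lookahead_value_eq p v).choose_spec

theorem value_le_tsum_of_optimal (w : ℕ → V) (α : ℕ → A)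
    (hw : ∀ n, w (n + 1) = G.tr (w n) (α n))
    (hα : ∀ n, G.owner (w n) = p → α n = G.optimalAction p (w n)) :
    G.value p (w 0) ≤ ∑' n, G.rew p (w n) (α n) * G.disc ^ n := by
  obtain ⟨C, hC⟩ := Finite.bddAbove_range fun v => |G.value p v|
  refine le_tsum_mul_pow_of_le_add_mul G.disc_pos.le G.disc_lt_one (fun n => hC ⟨w n, rfl⟩)
    (summable_comp_mul_pow_of_finite (fun x : V × A => G.rew p x.1 x.2) (fun n => (w n, α n))
      G.disc_pos.le G.disc_lt_one) fun n => ?_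
  rw [hw]
  by_cases hn : G.owner (w n) = p
  · rw [hα n hn]
    exact (G.lookahead_optimalAction p (w n)).ge
  · exact value_le_lookahead_value hn (α n)

theorem tsum_le_value_of_punished (w : ℕ → V) (α : ℕ → A)
    (hw : ∀ n, w (n + 1) = G.tr (w n) (α n))
    (hα : ∀ n, G.owner (w n) ≠ p → α n = G.optimalAction p (w n)) :
    ∑' n, G.rew p (w n) (α n) * G.disc ^ n ≤ G.value p (w 0) := by
  obtain ⟨C, hC⟩ := Finite.bddAbove_range fun v => |G.value p v|
  refine tsum_mul_pow_le_of_add_mul_le G.disc_pos.le G.disc_lt_one (fun n => hC ⟨w n, rfl⟩)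
    (summable_comp_mul_pow_of_finite (fun x : V × A => G.rew p x.1 x.2) (fun n => (w n, α n))
      G.disc_pos.le G.disc_lt_one) fun n => ?_
  rw [hw]
  by_cases hn : G.owner (w n) = p
  · exact lookahead_value_le hn (α n)
  · rw [hα n hn]
    exact (G.lookahead_optimalAction p (w n)).le

end Value

section Punishment

variable [Fintype V] [Fintype A] [Nonempty A] [DecidableEq P] [DecidableEq A] (G : MDSG P V A)

noncomputable def deviationStep : Option P → V × A → Option P
  | none, (v, a) => if a = G.optimalAction (G.owner v) v then none else some (G.owner v)
  | some q, _ => some q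

noncomputable def firstDeviator (h : List (V × A)) : Option P :=
  h.foldl G.deviationStep none

/-- Once a player `q` has deviated, everybody plays `optimalAction q`: the other players punish
`q`, whose own moves no longer matter. -/
noncomputable def punishingProfile : Profile V A :=
  fun h v => G.optimalAction ((G.firstDeviator h).getD (G.owner v)) v

theorem firstDeviator_append (h : List (V × A)) (x : V × A) :
    G.firstDeviator (h ++ [x]) = G.deviationStep (G.firstDeviator h) x := by
  simp [firstDeviator, List.foldl_append]

theorem firstDeviator_histState_punishingProfile (v : V) (n : ℕ) :
    G.firstDeviator (G.histState G.punishingProfile v n).1 = none := by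
  induction n with
  | zero => rfl
  | succ n ih =>
    rw [histState_succ, firstDeviator_append, ih]
    simp [deviationStep, playA, playV, punishingProfile, ih]

theorem playA_punishingProfile (v : V) (n : ℕ) :
    G.playA G.punishingProfile v n =
      G.optimalAction (G.owner (G.playV G.punishingProfile v n))
        (G.playV G.punishingProfile v n) := by
  simp [playA, punishingProfile, firstDeviator_histState_punishingProfile]

theorem firstDeviator_histState_of_le {σ : Profile V A} {v : V} {q : P} {m m' : ℕ}
    (hq : G.firstDeviator (G.histState σ v m).1 = some q) (hm : m ≤ m') :
    G.firstDeviator (G.histState σ v m').1 = some q := by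
  induction m', hm using Nat.le_induction with
  | base => exact hq
  | succ m' _ ih => rw [histState_succ, firstDeviator_append, ih]; rfl

variable {G}

theorem tailReward_le_value_of_deviation {p : P} {σ' : Profile V A}
    (hd : G.DiffOnly G.punishingProfile σ' p) {v : V} {n : ℕ}
    (hh : G.histState σ' v n = G.histState G.punishingProfile v n)
    (ha : G.playA σ' v n ≠ G.playA G.punishingProfile v n) :
    G.tailReward p σ' v n ≤ G.value p (G.playV σ' v n) := by
  have howner : G.owner (G.playV σ' v n) = p := by
    by_contra hne
    apply ha
    simp only [playA, playV, hh] at hne ⊢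
    exact hd _ _ hne
  have hdev : G.firstDeviator (G.histState σ' v (n + 1)).1 = some p := by
    rw [histState_succ, firstDeviator_append, hh, firstDeviator_histState_punishingProfile,
      ← howner, playV, hh]
    refine if_neg fun heq => ha ?_
    rw [heq, playA_punishingProfile, playV]
  refine G.tsum_le_value_of_punished p _ _ (fun k => rfl) fun k hk => ?_
  obtain _ | k := k
  · exact absurd howner hk
  · rw [playA, hd _ _ hk]
    have hk' : n + 1 ≤ n + (k + 1) := by omega
    simp only [punishingProfile, G.firstDeviator_histState_of_le hdev hk', Option.getD_some, playV]

theorem value_le_tailReward_punishingProfile (p : P) (v : V) (n : ℕ) :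
    G.value p (G.playV G.punishingProfile v n) ≤ G.tailReward p G.punishingProfile v n :=
  G.value_le_tsum_of_optimal p (fun k => G.playV G.punishingProfile v (n + k))
    (fun k => G.playA G.punishingProfile v (n + k)) (fun k => rfl) fun k hk => by
      rw [playA_punishingProfile, hk]

theorem reward_le_reward_punishingProfile {p : P} {σ' : Profile V A}
    (hd : G.DiffOnly G.punishingProfile σ' p) (v : V) :
    G.reward p σ' v ≤ G.reward p G.punishingProfile v := by
  by_cases hdev : ∃ n, G.playA σ' v n ≠ G.playA G.punishingProfile v n
  · have hmin : ∀ i < Nat.find hdev, G.playA σ' v i = G.playA G.punishingProfile v i :=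
      fun i hi => not_not.1 (Nat.find_min hdev hi)
    have hh := G.histState_eq_of_playA_eq hmin
    refine G.reward_le_reward_of_playA_eq_of_tailReward_le hmin ?_
    calc G.tailReward p σ' v (Nat.find hdev)
        ≤ G.value p (G.playV σ' v (Nat.find hdev)) :=
          tailReward_le_value_of_deviation hd hh (Nat.find_spec hdev)
      _ = G.value p (G.playV G.punishingProfile v (Nat.find hdev)) := by rw [playV, playV, hh]
      _ ≤ G.tailReward p G.punishingProfile v (Nat.find hdev) :=
        G.value_le_tailReward_punishingProfile p v _
  · push Not at hdev
    have hh : ∀ n, G.histState σ' v n = G.histState G.punishingProfile v n :=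
      fun n => G.histState_eq_of_playA_eq fun i _ => hdev i
    simp only [reward, playV, hdev, hh, le_refl]

theorem isNash_punishingProfile : G.IsNash G.punishingProfile := fun _ _ hd =>
  Summable.tsum_le_tsum (fun v => mul_le_mul_of_nonneg_left
    (reward_le_reward_punishingProfile hd v) (G.init_nonneg v)) (.of_finite) (.of_finite)

end Punishment

theorem IsNash.isLeaderSP {G : MDSG P V A} {σ : Profile V A} (hσ : G.IsNash σ) (l : P) :
    G.IsLeaderSP l σ :=
  fun p _ => hσ p

end MDSG

open MDSG in
/-- Every multi-player discounted sum game has a pure Nash equilibrium, and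
hence, for any designated leader, a pure leader strategy profile. -/
theorem pure_Nash_exists {P V A : Type} (G : MDSG P V A) :
    (∃ σ : Profile V A, G.IsNash σ) ∧
    (∀ l : P, ∃ σ : Profile V A, G.IsLeaderSP l σ) := by
  classical
  have := G.fin_V
  have := G.fin_A
  have := G.nonempty_A
  have := Fintype.ofFinite V
  have := Fintype.ofFinite A
  exact ⟨⟨_, G.isNash_punishingProfile⟩, fun l => ⟨_, G.isNash_punishingProfile.isLeaderSP l⟩⟩
end

section
/- For every MDSG with designated leader l and every memory bound b ≥ 1: if the set of Nash equilibria (respectively, leader strategy profiles) that are reward-and-punish profiles whose outcome plays are generated with compliance memory bound b is nonempty, then it contains an element maximizing the leader's expected reward E_l over that set; i.e., an optimal such Nash equilibrium (respectively, leader strategy profile) exists. -/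
open scoped BigOperators

/-!
A profile whose outcome plays are generated with compliance memory bound `b` has the same
outcome plays, hence the same expected rewards, as the profile run by its memory structure
everywhere. There are only finitely many memory structures with at most `b` states over the
finite sets `V` and `A`, so the leader's expected reward takes only finitely many values on
any set of such profiles, and a nonempty such set contains a maximizer.
-/

namespace MDSG

variable {P V A : Type}

/-- A memory structure with `n ≤ b` states `Fin n`: initial state, update and usage functions. -/
def MemoryMachine (V A : Type) (b : ℕ) : Type :=
  Σ n : Fin (b + 1), Fin n × (Fin n → V × A → Fin n) × (Fin n → V → A)

instance [Finite V] [Finite A] (b : ℕ) : Finite (MemoryMachine V A b) :=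
  inferInstanceAs (Finite (Sigma _))

def MemoryMachine.toProfile {b : ℕ} (M : MemoryMachine V A b) : Profile V A :=
  fun h v => M.2.2.2 (h.foldl M.2.2.1 M.2.1) v

def EqOnCompliant (G : MDSG P V A) (σ τ : Profile V A) : Prop :=
  ∀ h, (∀ i, ¬ G.DeviatesAt σ h i) → ∀ w, σ h w = τ h w

section Play

variable (G : MDSG P V A) (σ : Profile V A) (v : V)

theorem deviatesAt_append_singleton_iff (h : List (V × A)) (x : V × A) (i : ℕ) :
    G.DeviatesAt σ (h ++ [x]) i ↔
      G.DeviatesAt σ h i ∨ (i = h.length ∧ x.2 ≠ σ h x.1) := by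
  simp only [DeviatesAt, List.get_eq_getElem, List.length_append, List.length_singleton]
  constructor
  · rintro ⟨hi, hne⟩
    rcases Nat.lt_succ_iff_lt_or_eq.mp hi with hlt | rfl
    · left
      refine ⟨hlt, ?_⟩
      rwa [List.getElem_append_left hlt, List.take_append_of_le_length hlt.le] at hne
    · right
      simpa using hne
  · rintro (⟨hi, hne⟩ | ⟨rfl, hne⟩)
    · refine ⟨by omega, ?_⟩
      rwa [List.getElem_append_left hi, List.take_append_of_le_length hi.le]
    · exact ⟨by simp, by simpa using hne⟩

theorem not_deviatesAt_histState (k i : ℕ) : ¬ G.DeviatesAt σ (G.histState σ v k).1 i := by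
  induction k generalizing i with
  | zero => rintro ⟨hi, -⟩; simp [histState] at hi
  | succ k ih =>
    rw [histState, deviatesAt_append_singleton_iff]
    rintro (hdev | ⟨-, hne⟩)
    · exact ih i hdev
    · exact hne rfl

variable {G σ} {τ : Profile V A}

theorem histState_congr (hστ : G.EqOnCompliant σ τ)
    (k : ℕ) : G.histState σ v k = G.histState τ v k := by
  induction k with
  | zero => rfl
  | succ k ih =>
    simp only [histState]
    rw [hστ _ (G.not_deviatesAt_histState σ v k), ih]

theorem reward_congr (hστ : G.EqOnCompliant σ τ) (p : P) :
    G.reward p σ v = G.reward p τ v := by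
  refine tsum_congr fun i => ?_
  simp only [playA, playV]
  rw [hστ _ (G.not_deviatesAt_histState σ v i), histState_congr v hστ]

theorem ER_congr (hστ : G.EqOnCompliant σ τ) (p : P) :
    G.ER p σ = G.ER p τ :=
  tsum_congr fun v => by rw [reward_congr v hστ]

end Play

theorem ComplianceMemBound.exists_memoryMachine {G : MDSG P V A} {σ : Profile V A} {b : ℕ}
    (hσ : G.ComplianceMemBound σ b) :
    ∃ M : MemoryMachine V A b, G.EqOnCompliant σ M.toProfile := by
  obtain ⟨n, hn, m₀, μ, u, H⟩ := hσ
  exact ⟨⟨⟨n, Nat.lt_succ_of_le hn⟩, m₀, μ, u⟩, H⟩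

theorem finite_image_ER_of_complianceMemBound (G : MDSG P V A) (p : P) {b : ℕ}
    {s : Set (Profile V A)} (hs : ∀ σ ∈ s, G.ComplianceMemBound σ b) :
    (G.ER p '' s).Finite := by
  have := G.fin_V
  have := G.fin_A
  refine (Set.finite_range fun M : MemoryMachine V A b => G.ER p M.toProfile).subset ?_
  rintro _ ⟨σ, hσ, rfl⟩
  obtain ⟨M, hM⟩ := (hs σ hσ).exists_memoryMachine
  exact ⟨M, (ER_congr hM p).symm⟩

theorem exists_ER_maximizer_of_complianceMemBound (G : MDSG P V A) (p : P) {b : ℕ}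
    {Q : Profile V A → Prop} (hQ : ∀ σ, Q σ → G.ComplianceMemBound σ b) (hne : ∃ σ, Q σ) :
    ∃ σ, Q σ ∧ ∀ σ', Q σ' → G.ER p σ' ≤ G.ER p σ := by
  obtain ⟨σ, hσ, hmax⟩ := Set.Finite.exists_maximalFor' (G.ER p) {σ | Q σ}
    (G.finite_image_ER_of_complianceMemBound p hQ) hne
  exact ⟨σ, hσ, fun σ' hσ' => (le_total _ _).elim id (hmax hσ')⟩

end MDSG

open MDSG in
theorem optimal_bounded_memory_profiles_exist_general {P V A : Type} (G : MDSG P V A)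
    (l : P) (b : ℕ) :
    ((∃ σ : Profile V A,
        G.IsNash σ ∧ G.IsRewardPunish σ ∧ G.ComplianceMemBound σ b) →
      ∃ σ : Profile V A,
        (G.IsNash σ ∧ G.IsRewardPunish σ ∧ G.ComplianceMemBound σ b) ∧
        ∀ σ' : Profile V A,
          G.IsNash σ' ∧ G.IsRewardPunish σ' ∧ G.ComplianceMemBound σ' b →
          G.ER l σ' ≤ G.ER l σ) ∧
    ((∃ σ : Profile V A,
        G.IsLeaderSP l σ ∧ G.IsRewardPunish σ ∧ G.ComplianceMemBound σ b) →
      ∃ σ : Profile V A,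
        (G.IsLeaderSP l σ ∧ G.IsRewardPunish σ ∧ G.ComplianceMemBound σ b) ∧
        ∀ σ' : Profile V A,
          G.IsLeaderSP l σ' ∧ G.IsRewardPunish σ' ∧ G.ComplianceMemBound σ' b →
          G.ER l σ' ≤ G.ER l σ) :=
  ⟨G.exists_ER_maximizer_of_complianceMemBound l fun _ hσ => hσ.2.2,
    G.exists_ER_maximizer_of_complianceMemBound l fun _ hσ => hσ.2.2⟩

open MDSG in
/-- For every MDSG with designated leader `l` and every memory bound `b ≥ 1`:
if the set of Nash equilibria (respectively, leader strategy profiles) that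
are reward-and-punish profiles whose outcome plays are generated with
compliance memory bound `b` is nonempty, then it contains an element
maximizing the leader's expected reward over that set. -/
theorem optimal_bounded_memory_profiles_exist {P V A : Type} (G : MDSG P V A)
    (l : P) (b : ℕ) (hb : 1 ≤ b) :
    ((∃ σ : Profile V A,
        G.IsNash σ ∧ G.IsRewardPunish σ ∧ G.ComplianceMemBound σ b) →
      ∃ σ : Profile V A,
        (G.IsNash σ ∧ G.IsRewardPunish σ ∧ G.ComplianceMemBound σ b) ∧
        ∀ σ' : Profile V A,
          G.IsNash σ' ∧ G.IsRewardPunish σ' ∧ G.ComplianceMemBound σ' b →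
          G.ER l σ' ≤ G.ER l σ) ∧
    ((∃ σ : Profile V A,
        G.IsLeaderSP l σ ∧ G.IsRewardPunish σ ∧ G.ComplianceMemBound σ b) →
      ∃ σ : Profile V A,
        (G.IsLeaderSP l σ ∧ G.IsRewardPunish σ ∧ G.ComplianceMemBound σ b) ∧
        ∀ σ' : Profile V A,
          G.IsLeaderSP l σ' ∧ G.IsRewardPunish σ' ∧ G.ComplianceMemBound σ' b →
          G.ER l σ' ≤ G.ER l σ) :=
  optimal_bounded_memory_profiles_exist_general G l b
end
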